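/- Let N be a Nijenhuis operator on a Hom-associative algebra (A, ·, α) and μ_N(x,y) = N(x)·y + x·N(y) − N(x·y). Then for every scalar λ, the product μ + λ μ_N is again a Hom-associative multiplication on (A, α). -/
import Mathlib


section

variable {K A : Type*} [Field K] [AddCommGroup A] [Module K A]

/-- The deformed multiplication `μ_N(x,y) = N(x)·y + x·N(y) − N(x·y)`. -/
def muN (μ : A →ₗ[K] A →ₗ[K] A) (N : A →ₗ[K] A) (x y : A) : A :=
  μ (N x) y + μ x (N y) - N (μ x y)

/-- The pencil `μ + λ μ_N`. -/
def muPencil (μ : A →ₗ[K] A →ₗ[K] A) (N : A →ₗ[K] A) (lam : K) (x y : A) : A :=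
  μ x y + lam • muN μ N x y

lemma L1 (μ : A →ₗ[K] A →ₗ[K] A) (α : A →ₗ[K] A) (N : A →ₗ[K] A)
    (hassoc : ∀ a b c : A, μ (α a) (μ b c) = μ (μ a b) (α c))
    (hNα : ∀ a, N (α a) = α (N a)) (x y z : A) :
    μ (α x) (muN μ N y z) + muN μ N (α x) (μ y z) =
      μ (muN μ N x y) (α z) + muN μ N (μ x y) (α z) := by
  simp only [muN, map_add, map_sub, LinearMap.add_apply, LinearMap.sub_apply, hNα]
  rw [hassoc x (N y) z, hassoc x y (N z), hassoc (N x) y z, hassoc x y z]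
  abel

lemma L2 (μ : A →ₗ[K] A →ₗ[K] A) (α : A →ₗ[K] A) (N : A →ₗ[K] A)
    (hassoc : ∀ a b c : A, μ (α a) (μ b c) = μ (μ a b) (α c))
    (hNα : ∀ a, N (α a) = α (N a))
    (hNij : ∀ x y, μ (N x) (N y) = N (μ (N x) y + μ x (N y) - N (μ x y)))
    (x y z : A) :
    muN μ N (α x) (muN μ N y z) = muN μ N (muN μ N x y) (α z) := by
  have E1 := hassoc (N x) (N y) z
  have E2 := hassoc (N x) y (N z)
  have E3 := hassoc x (N y) (N z)
  have G1 := congrArg (μ (α x)) (hNij y z)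
  have G2 := congrArg (fun t => μ t (α z)) (hNij x y)
  have B1 := hNij (α x) (μ y z)
  have B2 := hNij (μ x y) (α z)
  have C1 := congrArg N (hassoc x (N y) z)
  have C2 := congrArg N (hassoc x y (N z))
  have C3 := congrArg N (hassoc (N x) y z)
  have C4 := congrArg N (congrArg N (hassoc x y z))
  simp only [map_add, map_sub, LinearMap.add_apply, LinearMap.sub_apply, hNα]
    at G1 G2 B1 B2 ⊢
  simp only [muN, map_add, map_sub, LinearMap.add_apply, LinearMap.sub_apply, hNα]
  linear_combination (norm := module)
    E1 + E2 + E3 - G1 + G2 - B1 + B2 - C1 - C2 - C3 + C4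

/-- for a Nijenhuis operator `N` on a Hom-associative algebra
`(A,·,α)` and every scalar `λ`, the product `μ + λ μ_N` is again a
Hom-associative multiplication on `(A,α)`. -/
theorem stmt_5 (μ : A →ₗ[K] A →ₗ[K] A) (α : A →ₗ[K] A) (N : A →ₗ[K] A)
    (hassoc : ∀ a b c : A, μ (α a) (μ b c) = μ (μ a b) (α c))
    (hmult : ∀ a b : A, α (μ a b) = μ (α a) (α b))
    (hNα : ∀ a, N (α a) = α (N a))
    (hNij : ∀ x y, μ (N x) (N y) = N (μ (N x) y + μ x (N y) - N (μ x y))) :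
    ∀ (lam : K) (x y z : A),
      muPencil μ N lam (α x) (muPencil μ N lam y z) =
        muPencil μ N lam (muPencil μ N lam x y) (α z) := by
  intro lam x y z
  have l1 := L1 μ α N hassoc hNα x y z
  have l2 := L2 μ α N hassoc hNα hNij x y z
  have h0 := hassoc x y z
  simp only [muPencil, muN, map_add, map_sub, map_smul, LinearMap.add_apply,
    LinearMap.sub_apply, LinearMap.smul_apply, smul_add, smul_sub] at l1 l2 ⊢
  linear_combination (norm := module) h0 + lam • l1 + (lam * lam) • l2

end
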